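/- arXiv:2509.06686 — 4 statements merged into one kernel-verified Lean document; each statement's English description precedes it below -/
import Mathlib

section
/- Let p = 4 and consider the cut triangle system with all ω ≡ 1. Then (λ, f, α) = ((1+2^{1/3})³, (1, −2^{1/3}, 1), −2^{1/3}) solves the system (1−α)³f_u³ + (f_u−f_w)³ = λf_u³, (1−1/α)³f_v³ + (f_v−f_w)³ = λf_v³, (f_w−f_u)³ + (f_w−f_v)³ = λf_w³. -/
/-- `(λ, f, α) = ((1+2^{1/3})³, (1, −2^{1/3}, 1), −2^{1/3})`
solves the cut triangle system with `ω ≡ 1` and `p = 4`. -/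
theorem stmt13 (α lam fu fv fw : ℝ)
    (hα : α = -(2 : ℝ) ^ ((1 : ℝ) / 3))
    (hlam : lam = (1 + (2 : ℝ) ^ ((1 : ℝ) / 3)) ^ 3)
    (hfu : fu = 1) (hfv : fv = -(2 : ℝ) ^ ((1 : ℝ) / 3)) (hfw : fw = 1) :
    (1 - α) ^ 3 * fu ^ 3 + (fu - fw) ^ 3 = lam * fu ^ 3 ∧
    (1 - 1 / α) ^ 3 * fv ^ 3 + (fv - fw) ^ 3 = lam * fv ^ 3 ∧
    (fw - fu) ^ 3 + (fw - fv) ^ 3 = lam * fw ^ 3 := by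
  set c : ℝ := (2 : ℝ) ^ ((1 : ℝ) / 3) with hc
  have hcpos : 0 < c := Real.rpow_pos_of_pos (by norm_num) _
  have hc3 : c ^ 3 = 2 := by
    rw [hc, ← Real.rpow_natCast ((2:ℝ) ^ ((1:ℝ)/3)) 3, ← Real.rpow_mul (by norm_num)]
    norm_num
  have hcne : c ≠ 0 := ne_of_gt hcpos
  subst hα hlam hfu hfv hfw
  refine ⟨by ring, ?_, by ring⟩
  have key : (1 - 1 / (-c)) ^ 3 * (-c) ^ 3 = -(1 + c) ^ 3 := by
    rw [← mul_pow]
    have h1 : (1 : ℝ) / (-c) * (-c) = 1 := div_mul_cancel₀ 1 (neg_ne_zero.mpr hcne)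
    have : (1 - 1 / (-c)) * (-c) = -(1 + c) := by linear_combination -h1
    rw [this]; ring
  rw [key]
  nlinarith [hc3, sq_nonneg (1+c)]
end

section
/- Let p = 4, ω ≡ 1, α = −2^{1/3}, λ = (1+2^{1/3})³, f = (1, −2^{1/3}, 1). The Hessian (1/4)∇²_f L of the cut-triangle Lagrangian at this point has first row and first column zero, and its lower-right 2×2 block is −3(1+2^{1/3})²·[[2^{−1/3}, 1],[1, 2^{1/3}]], which has determinant 0; hence the Hessian has rank 1 and the eigenpair is not regular. -/
/-! With `c³ = 2` the Hessian at `α = -c`, `λ = (1 + c)³`, `f = (1, -c, 1)` is the outer product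
of `(0, 1, c)` with `-3(1 + c)² (0, c⁻¹, 1)`: the first row and column vanish since `f_u = f_w`
and `(1 - α)³ = λ`, and the lower block entries reduce to multiples of `(1 + c)²` using only
`c³ = 2`. An outer product of nonzero vectors has rank one, and all its 2×2 minors vanish. -/

/-- The matrix `(1/4)∇²_f L` for the cut triangle (`p = 4`, `ω ≡ 1`). -/
noncomputable def cutHess (α lam fu fv fw : ℝ) : Matrix (Fin 3) (Fin 3) ℝ :=
  !![3 * (1 - α) ^ 3 * fu ^ 2 + 3 * (fu - fw) ^ 2 - 3 * lam * fu ^ 2, 0,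
        -3 * (fu - fw) ^ 2;
     0, 3 * (1 - 1 / α) ^ 3 * fv ^ 2 + 3 * (fv - fw) ^ 2 - 3 * lam * fv ^ 2,
        -3 * (fv - fw) ^ 2;
     -3 * (fw - fu) ^ 2, -3 * (fw - fv) ^ 2,
        3 * (fw - fu) ^ 2 + 3 * (fw - fv) ^ 2 - 3 * lam * fw ^ 2]

namespace Matrix

theorem one_le_rank_of_apply_ne_zero {K m n : Type*} [Field K] [Fintype n]
    {A : Matrix m n K} {i : m} {j : n} (h : A i j ≠ 0) : 1 ≤ A.rank := by
  have hsub : (A.submatrix (fun _ : Fin 1 => i) (fun _ : Fin 1 => j)).rank = 1 :=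
    rank_of_det_ne_zero (by simpa [det_fin_one] using h)
  exact hsub ▸ rank_submatrix_le A (fun _ : Fin 1 => i) (fun _ : Fin 1 => j)

theorem rank_vecMulVec_eq_one {K m n : Type*} [Field K] [Fintype n]
    {w : m → K} {v : n → K} (hw : w ≠ 0) (hv : v ≠ 0) : (vecMulVec w v).rank = 1 := by
  obtain ⟨i, hi⟩ := Function.ne_iff.mp hw
  obtain ⟨j, hj⟩ := Function.ne_iff.mp hv
  refine le_antisymm (rank_vecMulVec_le w v) (one_le_rank_of_apply_ne_zero (i := i) (j := j) ?_)
  simpa [vecMulVec_apply] using And.intro hi hj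

end Matrix

open Matrix

theorem two_rpow_one_div_three_pow_three : ((2 : ℝ) ^ ((1 : ℝ) / 3)) ^ 3 = 2 := by
  rw [one_div]
  exact_mod_cast Real.rpow_inv_natCast_pow (by norm_num : (0 : ℝ) ≤ 2) three_ne_zero

theorem cutHess_of_cube_eq_two {c : ℝ} (hc : c ^ 3 = 2) :
    cutHess (-c) ((1 + c) ^ 3) 1 (-c) 1 =
      vecMulVec ![0, 1, c] ![0, -3 * (1 + c) ^ 2 * c⁻¹, -3 * (1 + c) ^ 2] := by
  have hc0 : c ≠ 0 := by rintro rfl; norm_num at hc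
  ext i j
  fin_cases i <;> fin_cases j <;> simp [cutHess, vecMulVec_apply] <;> field_simp <;>
    first | linear_combination (-(1 + c) ^ 3) * hc | ring

/-- at `α = -2^{1/3}`, `λ = (1+2^{1/3})³`, `f = (1, -2^{1/3}, 1)`,
the cut-triangle Hessian has zero first row and column, its lower-right 2×2
block is `-3(1+2^{1/3})²·[[2^{-1/3}, 1],[1, 2^{1/3}]]` with determinant `0`;
the Hessian has rank `1` and the eigenpair is not regular. -/
theorem stmt14 (c α lam fu fv fw : ℝ)
    (hc : c = (2 : ℝ) ^ ((1 : ℝ) / 3))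
    (hα : α = -c) (hlam : lam = (1 + c) ^ 3)
    (hfu : fu = 1) (hfv : fv = -c) (hfw : fw = 1) :
    (∀ j, cutHess α lam fu fv fw 0 j = 0) ∧
    (∀ i, cutHess α lam fu fv fw i 0 = 0) ∧
    cutHess α lam fu fv fw 1 1 = -3 * (1 + c) ^ 2 * c⁻¹ ∧
    cutHess α lam fu fv fw 1 2 = -3 * (1 + c) ^ 2 ∧
    cutHess α lam fu fv fw 2 1 = -3 * (1 + c) ^ 2 ∧
    cutHess α lam fu fv fw 2 2 = -3 * (1 + c) ^ 2 * c ∧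
    cutHess α lam fu fv fw 1 1 * cutHess α lam fu fv fw 2 2
      - cutHess α lam fu fv fw 1 2 * cutHess α lam fu fv fw 2 1 = 0 ∧
    (cutHess α lam fu fv fw).rank = 1 := by
  have hc3 : c ^ 3 = 2 := hc ▸ two_rpow_one_div_three_pow_three
  have hc_pos : 0 < c := by rw [hc]; positivity
  have hc0 : c ≠ 0 := hc_pos.ne'
  have hc1 : 1 + c ≠ 0 := by positivity
  subst hα hlam hfu hfv hfw
  rw [cutHess_of_cube_eq_two hc3]
  refine ⟨fun j => ?_, fun i => ?_, ?_, ?_, ?_, ?_, ?_, rank_vecMulVec_eq_one ?_ ?_⟩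
  · fin_cases j <;> simp [vecMulVec_apply]
  · fin_cases i <;> simp [vecMulVec_apply]
  · simp [vecMulVec_apply]
  · simp [vecMulVec_apply]
  · simp only [vecMulVec_apply, cons_val, cons_val_one, cons_val_zero]
    field_simp
  · simp only [vecMulVec_apply, cons_val]
    ring
  · simp only [vecMulVec_apply]; ring
  · exact Function.ne_iff.mpr ⟨1, by simp⟩
  · exact Function.ne_iff.mpr ⟨2, by simp [hc1]⟩
end

section
/- Let p = 4, ω ≡ 1, and suppose (λ, f) solves the cut triangle system with α ≠ 0 and f_u = f_w but f_v ≠ f_w. If f_u = f_w = 1, then λ = (1−α)³, f_v = α, (1 + α^{−3})·f_v³ = −1, and consequently α = −2^{1/3}. -/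
lemma cube_inj : Function.Injective fun x : ℝ => x ^ 3 :=
  Odd.strictMono_pow (by decide) |>.injective

/-- in the cut triangle system (`ω ≡ 1`, `p = 4`, `α ≠ 0`) with
`f_u = f_w = 1` and `f_v ≠ f_w`, one gets `λ = (1-α)³`, `f_v = α`,
`(1 + α⁻³) f_v³ = -1`, and hence `α = -2^{1/3}`. -/
theorem stmt16 (α lam fu fv fw : ℝ) (hα : α ≠ 0)
    (h1 : (1 - α) ^ 3 * fu ^ 3 + (fu - fw) ^ 3 = lam * fu ^ 3)
    (h2 : (1 - 1 / α) ^ 3 * fv ^ 3 + (fv - fw) ^ 3 = lam * fv ^ 3)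
    (h3 : (fw - fu) ^ 3 + (fw - fv) ^ 3 = lam * fw ^ 3)
    (huw : fu = fw) (hvw : fv ≠ fw) (hfu : fu = 1) :
    lam = (1 - α) ^ 3 ∧ fv = α ∧
    (1 + (α ^ 3)⁻¹) * fv ^ 3 = -1 ∧
    α = -(2 : ℝ) ^ ((1 : ℝ) / 3) := by
  subst huw hfu
  have hlam : lam = (1 - α) ^ 3 := by linarith [h1]
  subst hlam
  have hfv : fv = α := by
    have : (1 - fv) ^ 3 = (1 - α) ^ 3 := by linarith [h3]
    have := cube_inj this
    linarith
  subst hfv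
  have hα1 : fv ≠ 1 := hvw
  have key : fv ^ 3 = -2 := by
    have h2' : (fv - 1) ^ 3 * 2 = -((fv - 1) ^ 3 * fv ^ 3) := by
      have hx : (1 - 1 / fv) ^ 3 * fv ^ 3 = (fv - 1) ^ 3 := by
        field_simp
      nlinarith [h2, hx]

    have hne : (fv - 1) ^ 3 ≠ 0 := pow_ne_zero _ (sub_ne_zero.mpr hα1)
    have : (fv - 1) ^ 3 * 2 = (fv - 1) ^ 3 * (-fv ^ 3) := by linarith
    have := mul_left_cancel₀ hne this
    linarith
  refine ⟨rfl, rfl, ?_, ?_⟩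
  · rw [key]; field_simp [key]; ring
  · have h2pow : (-(2 : ℝ) ^ ((1 : ℝ) / 3)) ^ 3 = -2 := by
      rw [neg_pow]
      rw [← Real.rpow_natCast ((2:ℝ) ^ ((1:ℝ)/3)) 3, ← Real.rpow_mul (by norm_num)]
      norm_num
    exact cube_inj (key.trans h2pow.symm)
end

section
/- With the cut construction of the preceding setting (α defined from an eigenpair (λ₀, f₀) of H_p via α_{uv} = σ_{uv}f₀(v)/f₀(u) on cut edges where f₀(u) ≠ 0, α_{uv} = −1 otherwise), the function f₀ is an eigenpair of the cut Hamiltonian Ĥ_{p,α} with the same eigenvalue λ₀, where Ĥ_{p,α} uses the restricted weights ω|_{E∖E_cut}, restricted signs σ|_{E∖E_cut}, and modified potential κ̂_u = κ_u + Σ_{v: uv ∈ E_cut} ω_{uv}φ_p(1 − α_{uv}). -/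
/-- `φ_p(x) = |x|^(p-2) · x` (real exponent; `φ_p(0) = 0`). -/
noncomputable def phiP (p x : ℝ) : ℝ := |x| ^ (p - 2) * x


lemma phiP_mul (p a b : ℝ) : phiP p (a * b) = phiP p a * phiP p b := by
  unfold phiP
  rw [abs_mul, Real.mul_rpow (abs_nonneg a) (abs_nonneg b)]
  ring

lemma phiP_zero (p : ℝ) : phiP p 0 = 0 := by simp [phiP]

/-- with the cut parameters `α` constructed from an eigenpair
`(λ₀, f₀)` of `H_p`, the function `f₀` is an eigenfunction of the cut
Hamiltonian `Ĥ_{p,α}` (restricted weights and signs, modified potential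
`κ̂_u = κ_u + Σ_{uv ∈ E_cut} ω_{uv} φ_p(1 − α_{uv})`) with eigenvalue `λ₀`. -/
theorem stmt18 {V : Type*} [Fintype V] [DecidableEq V]
    (G : SimpleGraph V) [DecidableRel G.Adj] (hconn : G.Connected)
    (p : ℝ) (hp : 1 < p)
    (ω : V → V → ℝ) (hωsymm : ∀ u v, ω u v = ω v u)
    (hωpos : ∀ u v, G.Adj u v → 0 < ω u v)
    (σ : V → V → ℝ) (hσ : ∀ u v, σ u v = 1 ∨ σ u v = -1)
    (hσsymm : ∀ u v, σ u v = σ v u)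
    (κ ρ : V → ℝ) (hρ : ∀ u, 0 < ρ u)
    (Ecut : Finset (V × V))
    (hEsub : ∀ u v, (u, v) ∈ Ecut → G.Adj u v)
    (hEsymm : ∀ u v, (u, v) ∈ Ecut → (v, u) ∈ Ecut)
    (lam0 : ℝ) (f0 : V → ℝ)
    (heig : ∀ u : V,
      (∑ v ∈ G.neighborFinset u, ω u v * phiP p (f0 u - σ u v * f0 v))
        + κ u * phiP p (f0 u) = lam0 * ρ u * phiP p (f0 u))
    (hdich : ∀ u v, (u, v) ∈ Ecut → (f0 u = 0 ↔ f0 v = 0))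
    (α : V → V → ℝ)
    (hα : ∀ u v, α u v = if f0 u ≠ 0 then σ u v * f0 v / f0 u else -1)
    (κhat : V → ℝ)
    (hκhat : ∀ u, κhat u = κ u +
      ∑ v ∈ (G.neighborFinset u).filter (fun v => (u, v) ∈ Ecut),
        ω u v * phiP p (1 - α u v)) :
    ∀ u : V,
      (∑ v ∈ (G.neighborFinset u).filter (fun v => (u, v) ∉ Ecut),
          ω u v * phiP p (f0 u - σ u v * f0 v))
        + κhat u * phiP p (f0 u) = lam0 * ρ u * phiP p (f0 u) := by
  intro u
  have hsplit := Finset.sum_filter_add_sum_filter_not (G.neighborFinset u)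
    (fun v => (u, v) ∈ Ecut) (fun v => ω u v * phiP p (f0 u - σ u v * f0 v))
  have hcut : ∑ v ∈ (G.neighborFinset u).filter (fun v => (u, v) ∈ Ecut),
      ω u v * phiP p (f0 u - σ u v * f0 v)
      = (∑ v ∈ (G.neighborFinset u).filter (fun v => (u, v) ∈ Ecut),
          ω u v * phiP p (1 - α u v)) * phiP p (f0 u) := by
    rw [Finset.sum_mul]
    apply Finset.sum_congr rfl
    intro v hv
    rw [Finset.mem_filter] at hv
    by_cases h : f0 u = 0
    · have hv0 : f0 v = 0 := (hdich u v hv.2).mp h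
      simp [h, hv0, phiP_zero]
    · have : f0 u - σ u v * f0 v = (1 - α u v) * f0 u := by
        rw [hα]; simp only [h, ne_eq, not_false_iff, if_true]
        field_simp
      rw [this, phiP_mul]; ring
  have key := heig u
  rw [← hsplit, hcut] at key
  rw [hκhat, add_mul]
  linarith
end
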